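/- arXiv:math/0010324 — 2 statements merged into one kernel-verified Lean document; each statement's English description precedes it below -/
import Mathlib

section
/- If there exists a rational invertible (n+2)×(n+2) matrix W with W^T Q_{D,n} W = Q_{W,n}, then n = 2k² or n = (2k-1)² for some positive integer k. -/
open Matrix

/-- Descartes quadratic form matrix in dimension `n`, over `ℚ`. -/
def QDq (n : ℕ) : Matrix (Fin (n+2)) (Fin (n+2)) ℚ :=
  1 - (n : ℚ)⁻¹ • Matrix.of (fun _ _ => (1 : ℚ))

/-- Wilker quadratic form matrix in dimension `n`, over `ℚ`. -/
def QWq (n : ℕ) : Matrix (Fin (n+2)) (Fin (n+2)) ℚ :=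
  Matrix.of (fun i j =>
    if (i = 0 ∧ j = 1) ∨ (i = 1 ∧ j = 0) then (-4 : ℚ)
    else if i = j then (if 2 ≤ (i : ℕ) then 2 else 0) else 0)

/-!
Taking determinants in `Wᵀ Q_D W = Q_W` gives `det(W)² · det Q_D = det Q_W`. By the matrix
determinant lemma `det Q_D = 1 - (n + 2)/n = -2/n`, and `Q_W` is a diagonal matrix times the
transposition matrix of `(0 1)`, so `det Q_W = -16 · 2ⁿ`. Hence `n · 2^(n+3)` is a rational
square. Splitting off an even power of `2`, this leaves `2n` as a square when `n` is even, which
forces `n = 2k²`, and `n` itself as a square when `n` is odd, so `n = (2k - 1)²`.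
-/

theorem Matrix.det_one_sub_smul_of_one {ι R : Type*} [Fintype ι] [DecidableEq ι] [CommRing R]
    (c : R) : (1 - c • of fun _ _ : ι => (1 : R)).det = 1 - c * Fintype.card ι := by
  have h : (1 - c • of fun _ _ : ι => (1 : R)) =
      (1 : Matrix ι ι R) +
        replicateCol Unit (fun _ : ι => -c) * replicateRow Unit (fun _ : ι => (1 : R)) := by
    ext i j
    simp [replicateCol, replicateRow, mul_apply, sub_eq_add_neg]
  rw [h, det_one_add_replicateCol_mul_replicateRow]
  simp [dotProduct, sub_eq_add_neg, mul_comm]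

theorem det_QDq {n : ℕ} (hn : n ≠ 0) : (QDq n).det = -2 / n := by
  rw [QDq, det_one_sub_smul_of_one, Fintype.card_fin]
  field_simp
  push_cast
  ring

theorem QWq_eq_diagonal_mul_permMatrix (n : ℕ) :
    QWq n = diagonal (fun i : Fin (n + 2) => if 2 ≤ (i : ℕ) then (2 : ℚ) else -4) *
      (Equiv.swap 0 1 : Equiv.Perm (Fin (n + 2))).permMatrix ℚ := by
  ext i j
  obtain rfl | rfl | hi : i = 0 ∨ i = 1 ∨ 2 ≤ (i : ℕ) := by
    simp only [Fin.ext_iff, Fin.val_zero, Fin.val_one]; omega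
  · simp [QWq, diagonal_mul, PEquiv.toMatrix_apply, eq_comm]
  · simp [QWq, diagonal_mul, PEquiv.toMatrix_apply, eq_comm]
  · have hi0 : i ≠ 0 := by rintro rfl; simp at hi
    have hi1 : i ≠ 1 := by rintro rfl; simp at hi
    simp [QWq, diagonal_mul, PEquiv.toMatrix_apply, Equiv.swap_apply_of_ne_of_ne hi0 hi1,
      hi0, hi1, hi]

theorem det_QWq (n : ℕ) : (QWq n).det = -2 ^ (n + 4) := by
  rw [QWq_eq_diagonal_mul_permMatrix, det_mul, det_diagonal, det_permutation,
    Equiv.Perm.sign_swap (by simp), Fin.prod_univ_succ, Fin.prod_univ_succ]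
  norm_num [pow_add, mul_comm, mul_left_comm]

theorem det_sq_eq_of_transpose_mul_QDq_mul_eq_QWq {n : ℕ} (hn : n ≠ 0)
    {W : Matrix (Fin (n + 2)) (Fin (n + 2)) ℚ} (hW : Wᵀ * QDq n * W = QWq n) :
    W.det ^ 2 = n * 2 ^ (n + 3) := by
  have hdet := congrArg det hW
  rw [det_mul, det_mul, det_transpose, det_QDq hn, det_QWq] at hdet
  have hn' : (n : ℚ) ≠ 0 := by exact_mod_cast hn
  field_simp at hdet
  linear_combination -hdet / 2

theorem Nat.isSquare_of_isSquare_cast_mul_sq {a : ℕ} {c : ℚ} (hc : c ≠ 0)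
    (h : IsSquare ((a : ℚ) * c ^ 2)) : IsSquare a := by
  obtain ⟨r, hr⟩ := h
  refine Rat.isSquare_natCast_iff.mp ⟨r / c, ?_⟩
  field_simp
  linear_combination hr

theorem Nat.exists_eq_two_mul_sq_of_isSquare_two_mul {m : ℕ} (h : IsSquare (2 * m)) :
    ∃ k, m = 2 * k ^ 2 := by
  obtain ⟨s, hs⟩ := h
  obtain ⟨k, rfl⟩ : 2 ∣ s := (Nat.prime_two.dvd_mul.mp ⟨m, hs.symm⟩).elim id id
  exact ⟨k, by linarith⟩

theorem Nat.exists_eq_sq_two_mul_sub_one_of_odd_of_isSquare {m : ℕ} (hm : Odd m)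
    (h : IsSquare m) : ∃ k, 0 < k ∧ m = (2 * k - 1) ^ 2 := by
  obtain ⟨r, rfl⟩ := h
  obtain ⟨c, rfl⟩ := (Nat.odd_mul.mp hm).1
  exact ⟨c + 1, c.succ_pos, by rw [sq, show 2 * (c + 1) - 1 = 2 * c + 1 by omega]⟩

theorem superRational_dimension_necessary_general (n : ℕ) (hn : 2 ≤ n)
    (W : Matrix (Fin (n+2)) (Fin (n+2)) ℚ)
    (hW : Wᵀ * QDq n * W = QWq n) :
    ∃ k : ℕ, 0 < k ∧ (n = 2 * k ^ 2 ∨ n = (2 * k - 1) ^ 2) := by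
  have hdet := det_sq_eq_of_transpose_mul_QDq_mul_eq_QWq (by omega) hW
  rcases Nat.even_or_odd' n with ⟨l, rfl | rfl⟩
  · have hsq : IsSquare (((2 * (2 * l) : ℕ) : ℚ) * (2 ^ (l + 1)) ^ 2) :=
      ⟨W.det, by rw [← sq, hdet]; push_cast; ring⟩
    obtain ⟨k, hk⟩ := Nat.exists_eq_two_mul_sq_of_isSquare_two_mul
      (Nat.isSquare_of_isSquare_cast_mul_sq (by positivity) hsq)
    refine ⟨k, Nat.pos_of_ne_zero ?_, Or.inl hk⟩
    rintro rfl
    omega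
  · have hsq : IsSquare (((2 * l + 1 : ℕ) : ℚ) * (2 ^ (l + 2)) ^ 2) :=
      ⟨W.det, by rw [← sq, hdet]; ring⟩
    obtain ⟨k, hk, hkn⟩ := Nat.exists_eq_sq_two_mul_sub_one_of_odd_of_isSquare
      (odd_two_mul_add_one l) (Nat.isSquare_of_isSquare_cast_mul_sq (by positivity) hsq)
    exact ⟨k, hk, Or.inr hkn⟩

theorem superRational_dimension_necessary (n : ℕ) (hn : 2 ≤ n)
    (W : Matrix (Fin (n+2)) (Fin (n+2)) ℚ) (hWinv : IsUnit W.det)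
    (hW : Wᵀ * QDq n * W = QWq n) :
    ∃ k : ℕ, 0 < k ∧ (n = 2 * k ^ 2 ∨ n = (2 * k - 1) ^ 2) :=
  superRational_dimension_necessary_general n hn W hW
end

section
/- For n ≥ 2, the integer n·2^{n+3} is the square of a rational number if and only if n = 2k² for some positive integer k or n = (2k-1)² for some positive integer k. -/
lemma isSquare_of_mul_sq (a c : ℕ) (hc : 0 < c) (h : IsSquare (a * c ^ 2)) :
    IsSquare a := by
  obtain ⟨d, hd⟩ := h
  have hcd : c ∣ d := by
    rw [← Nat.pow_dvd_pow_iff (by norm_num : 2 ≠ 0)]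
    exact ⟨a, by rw [pow_two, ← hd]; ring⟩
  obtain ⟨e, he⟩ := hcd
  refine ⟨e, ?_⟩
  have : a * c ^ 2 = e * e * c ^ 2 := by rw [hd, he]; ring
  exact Nat.eq_of_mul_eq_mul_right (by positivity) this

theorem rational_square_iff (n : ℕ) (hn : 2 ≤ n) :
    (∃ q : ℚ, q ^ 2 = (n : ℚ) * 2 ^ (n + 3)) ↔
      ∃ k : ℕ, 0 < k ∧ (n = 2 * k ^ 2 ∨ n = (2 * k - 1) ^ 2) := by
  have key : (∃ q : ℚ, q ^ 2 = (n : ℚ) * 2 ^ (n + 3)) ↔ IsSquare (n * 2 ^ (n + 3)) := by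
    rw [← Rat.isSquare_natCast_iff]
    push_cast
    constructor
    · rintro ⟨q, hq⟩; exact ⟨q, by rw [← hq]; ring⟩
    · rintro ⟨q, hq⟩; exact ⟨q, by rw [hq]; ring⟩
  rw [key]
  constructor
  · intro h
    rcases Nat.even_or_odd n with he | ho
    · obtain ⟨m, hm⟩ := he
      have hn2 : n = 2 * m := by omega
      have hsq : IsSquare m := by
        apply isSquare_of_mul_sq m (2 ^ ((n + 4) / 2)) (by positivity)
        have : m * (2 ^ ((n + 4) / 2)) ^ 2 = n * 2 ^ (n + 3) := by
          rw [← pow_mul, hn2]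
          have : (2 * m + 4) / 2 * 2 = 2 * m + 4 := by omega
          rw [hn2] at *
          rw [this, pow_add]
          ring
        rwa [this]
      obtain ⟨k, hk⟩ := hsq
      refine ⟨k, by nlinarith, Or.inl (by rw [hn2, hk]; ring)⟩
    · have hsq : IsSquare n := by
        apply isSquare_of_mul_sq n (2 ^ ((n + 3) / 2)) (by positivity)
        have h2 : (n + 3) / 2 * 2 = n + 3 := by
          obtain ⟨m, hm⟩ := ho; omega
        have : n * (2 ^ ((n + 3) / 2)) ^ 2 = n * 2 ^ (n + 3) := by
          rw [← pow_mul, h2]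
        rwa [this]
      obtain ⟨j, hj⟩ := hsq
      have hjo : Odd j := by
        rcases Nat.even_or_odd j with hje | hjo
        · exact absurd ho (Nat.not_odd_iff_even.mpr (by rw [hj]; exact hje.mul_right j))
        · exact hjo
      obtain ⟨k, hk⟩ := hjo
      refine ⟨k + 1, by omega, Or.inr ?_⟩
      have : 2 * (k + 1) - 1 = j := by omega
      rw [this, hj]; ring
  · rintro ⟨k, hk, h | h⟩
    · have hpar : (n + 4) % 2 = 0 := by omega
      refine ⟨k * 2 ^ ((n + 4) / 2), ?_⟩
      have h2 : (n + 4) / 2 * 2 = n + 4 := by omega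
      calc n * 2 ^ (n + 3) = k ^ 2 * 2 ^ (n + 4) := by rw [h, pow_add]; ring
        _ = k ^ 2 * (2 ^ ((n + 4) / 2)) ^ 2 := by rw [← pow_mul, h2]
        _ = k * 2 ^ ((n + 4) / 2) * (k * 2 ^ ((n + 4) / 2)) := by ring
    · have hodd : n % 2 = 1 := by
        have : (2 * k - 1) % 2 = 1 := by omega
        rw [h, pow_two, Nat.mul_mod, this]
      refine ⟨(2 * k - 1) * 2 ^ ((n + 3) / 2), ?_⟩
      have h2 : (n + 3) / 2 * 2 = n + 3 := by omega
      calc n * 2 ^ (n + 3) = (2 * k - 1) ^ 2 * 2 ^ (n + 3) := by rw [h]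
        _ = (2 * k - 1) ^ 2 * (2 ^ ((n + 3) / 2)) ^ 2 := by rw [← pow_mul, h2]
        _ = (2 * k - 1) * 2 ^ ((n + 3) / 2) * ((2 * k - 1) * 2 ^ ((n + 3) / 2)) := by ring
end
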